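/- For integers m ≥ n ≥ 1, the Garsia–Remmel q-hit numbers and the Dworkin-variant q-hit numbers of a partition λ inside an m×m board satisfy H̃_j^{m}(λ) = q^{|λ| − jm} · H_j^{m,m}(λ), where H̃_j^{m}(λ) is defined by ∑_j H̃_j^{m}(λ) x^j = ∑_i R_i(λ)[m−i]! ∏_{k=m−i+1}^{m}(x − q^k). -/

import Mathlib

open Finset

noncomputable section
open scoped Classical

variable {K : Type*} [Field K]

/-- The `q`-integer `[x] = (1 - q^x)/(1 - q)` for an integer `x`. -/
def qInt (q : K) (x : ℤ) : K := (1 - q ^ x) / (1 - q)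

/-- The falling `q`-factorial `[x]_j = [x][x-1]⋯[x-j+1]`. -/
def qFall (q : K) (x : ℤ) (j : ℕ) : K := ∏ t ∈ Finset.range j, qInt q (x - t)

/-- The `q`-factorial `[n]! = [n]_n`. -/
def qFact (q : K) (n : ℕ) : K := qFall q (n : ℤ) n

/-- The Gaussian (`q`-)binomial coefficient `[a]!/([b]! [a-b]!)`. -/
def qBinom (q : K) (a b : ℕ) : K := qFact q a / (qFact q b * qFact q (a - b))

/-- The cells of the Ferrers board of `lam` (1-indexed rows `1,…,ℓ`):
cell `(i,j)` with `1 ≤ i ≤ ℓ` and `1 ≤ j ≤ lam i`. -/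
def board (lam : ℕ → ℕ) (ℓ : ℕ) : Finset (ℕ × ℕ) :=
  ((Finset.Icc 1 ℓ) ×ˢ (Finset.Icc 1 ((Finset.Icc 1 ℓ).sup lam))).filter
    (fun c => c.2 ≤ lam c.1)

/-- Placements of `k` non-attacking rooks on the Ferrers board of `lam`. -/
def placements (lam : ℕ → ℕ) (ℓ k : ℕ) : Finset (Finset (ℕ × ℕ)) :=
  (board lam ℓ).powerset.filter
    (fun p => p.card = k ∧ ∀ a ∈ p, ∀ b ∈ p, a ≠ b → a.1 ≠ b.1 ∧ a.2 ≠ b.2)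

/-- The Garsia–Remmel inversion statistic of a rook placement `p`: the number of
cells of the board that are not occupied by a rook and not directly west
(same row, with a rook strictly to the east) or north (same column, with a rook
strictly to the south) of a rook. -/
def rInv (lam : ℕ → ℕ) (ℓ : ℕ) (p : Finset (ℕ × ℕ)) : ℕ :=
  ((board lam ℓ).filter (fun c => c ∉ p ∧
      (∀ r ∈ p, r.1 = c.1 → r.2 < c.2) ∧
      (∀ r ∈ p, r.2 = c.2 → r.1 < c.1))).card

/-- The Garsia–Remmel `q`-rook number `R_k(λ) = ∑_p q^{inv(p)}`. -/
def qRook (q : K) (lam : ℕ → ℕ) (ℓ k : ℕ) : K :=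
  ∑ p ∈ placements lam ℓ k, q ^ rInv lam ℓ p

/-- The size `|λ| = λ_1 + ⋯ + λ_ℓ`. -/
def pSize (lam : ℕ → ℕ) (ℓ : ℕ) : ℕ := ∑ i ∈ Finset.Icc 1 ℓ, lam i

/-- The `q`-hit numbers `H_k^{m,n}(λ)` of `λ ⊆ n×m`, defined from the `q`-rook
numbers by the change of basis
`H_k^{m,n}(λ) = (q^{C(k,2)-|λ|}/[m-n]!) ∑_{i=k}^{n} R_i(λ) [m-i]! qbinom(i,k) (-1)^{i+k} q^{mi-C(i,2)}`. -/
def qHit (q : K) (m n : ℕ) (lam : ℕ → ℕ) (ℓ k : ℕ) : K :=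
  (q ^ ((k.choose 2 : ℤ) - (pSize lam ℓ : ℤ)) / qFact q (m - n)) *
    ∑ i ∈ Finset.Icc k n, qRook q lam ℓ i * qFact q (m - i) * qBinom q i k *
      (-1 : K) ^ (i + k) * q ^ ((m : ℤ) * (i : ℤ) - (i.choose 2 : ℤ))

/-- `lam : ℕ → ℕ` is a partition with exactly `ℓ` (positive) parts `lam 1 ≥ ⋯ ≥ lam ℓ ≥ 1`. -/
def IsPartition (lam : ℕ → ℕ) (ℓ : ℕ) : Prop :=
  (∀ i j, 1 ≤ i → i ≤ j → lam j ≤ lam i) ∧ (∀ i, ℓ < i → lam i = 0) ∧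
    (∀ i, 1 ≤ i → i ≤ ℓ → 1 ≤ lam i)

/-- `lam` is a partition with `ℓ` parts contained in an `n × m` board. -/
def IsPartitionIn (lam : ℕ → ℕ) (ℓ n m : ℕ) : Prop :=
  IsPartition lam ℓ ∧ ℓ ≤ n ∧ lam 1 ≤ m

/-- The rectangular partition `a^b` (`b` parts equal to `a`). -/
def rect (a b : ℕ) : ℕ → ℕ := fun i => if 1 ≤ i ∧ i ≤ b then a else 0

/-- The partition obtained from `lam` by deleting its `j`-th column. -/
def delCol (lam : ℕ → ℕ) (j : ℕ) : ℕ → ℕ :=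
  fun r => if j ≤ lam r then lam r - 1 else lam r

/-- The partition obtained from `lam` by deleting its `i`-th row. -/
def delRow (lam : ℕ → ℕ) (i : ℕ) : ℕ → ℕ :=
  fun r => if r < i then lam r else lam (r + 1)

/-- The `j`-th column length `λ'_j` of `lam` (with `ℓ` rows). -/
def conjP (lam : ℕ → ℕ) (ℓ j : ℕ) : ℕ :=
  ((Finset.Icc 1 ℓ).filter (fun r => j ≤ lam r)).card

/-! By the `q`-binomial theorem, `∏_{t=a+1}^{a+i} (x - q^t)` has `x^j`-coefficient
`(-1)^{i-j} q^{(i-j)a + C(i-j+1,2)} [i choose j]_q`. With `a = m - i`, comparing coefficients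
turns the claim into the defining change of basis of `H_j^{m,m}(λ)`, up to the exponent
identity `(i-j)(m-i) + C(i-j+1,2) = C(j,2) - jm + mi - C(i,2)`. -/

section QAnalogues

variable {q : K}

lemma one_sub_mul_qInt_natCast (hq : q ≠ 1) (n : ℕ) : (1 - q) * qInt q n = 1 - q ^ n := by
  rw [qInt, zpow_natCast, mul_div_cancel₀ _ (sub_ne_zero.2 hq.symm)]

lemma qInt_add (hq : q ≠ 1) (a b : ℕ) :
    qInt q (a + b : ℕ) = qInt q a + q ^ a * qInt q b := by
  refine mul_left_cancel₀ (sub_ne_zero.2 hq.symm) ?_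
  rw [mul_add, mul_left_comm, one_sub_mul_qInt_natCast hq, one_sub_mul_qInt_natCast hq,
    one_sub_mul_qInt_natCast hq, pow_add]
  ring

lemma qInt_natCast_ne_zero (hq : ∀ j : ℕ, 0 < j → q ^ j ≠ 1) {n : ℕ} (hn : 0 < n) :
    qInt q n ≠ 0 := by
  intro h
  have := one_sub_mul_qInt_natCast (by simpa using hq 1 one_pos) n
  rw [h, mul_zero, eq_comm, sub_eq_zero] at this
  exact hq n hn this.symm

lemma qFact_zero : qFact q 0 = 1 := by simp [qFact, qFall]

lemma qFact_succ (n : ℕ) : qFact q (n + 1) = qInt q (n + 1 : ℕ) * qFact q n := by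
  simp only [qFact, qFall, prod_range_succ', Nat.cast_add, Nat.cast_one, CharP.cast_eq_zero,
    sub_zero, add_sub_add_right_eq_sub]
  rw [mul_comm]

lemma qFact_ne_zero (hq : ∀ j : ℕ, 0 < j → q ^ j ≠ 1) (n : ℕ) : qFact q n ≠ 0 := by
  induction n with
  | zero => simp [qFact_zero]
  | succ n ih => rw [qFact_succ]; exact mul_ne_zero (qInt_natCast_ne_zero hq n.succ_pos) ih

variable (hq : ∀ j : ℕ, 0 < j → q ^ j ≠ 1)
include hq

lemma qBinom_zero_right (n : ℕ) : qBinom q n 0 = 1 := by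
  rw [qBinom, qFact_zero, Nat.sub_zero, one_mul, div_self (qFact_ne_zero hq n)]

lemma qBinom_self (n : ℕ) : qBinom q n n = 1 := by
  rw [qBinom, Nat.sub_self, qFact_zero, mul_one, div_self (qFact_ne_zero hq n)]

lemma qBinom_succ_succ {n k : ℕ} (hk : k < n) :
    qBinom q (n + 1) (k + 1) = qBinom q n k + q ^ (k + 1) * qBinom q n (k + 1) := by
  obtain ⟨e, rfl⟩ := Nat.exists_eq_add_of_lt hk
  have hsplit : qInt q (k + e + 1 + 1 : ℕ) =
      qInt q (k + 1 : ℕ) + q ^ (k + 1) * qInt q (e + 1 : ℕ) := by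
    rw [← qInt_add (by simpa using hq 1 one_pos)]; congr 2; ring
  rw [qBinom, qBinom, qBinom, show k + e + 1 + 1 - (k + 1) = e + 1 by omega,
    show k + e + 1 - k = e + 1 by omega, show k + e + 1 - (k + 1) = e by omega,
    qFact_succ (k + e + 1), qFact_succ k, qFact_succ e, hsplit]
  have := qFact_ne_zero hq k
  have := qFact_ne_zero hq e
  have := qFact_ne_zero hq (k + e + 1)
  have := qInt_natCast_ne_zero hq k.succ_pos
  have := qInt_natCast_ne_zero hq e.succ_pos
  field_simp

end QAnalogues

open Polynomial in
lemma coeff_prod_Ioc_X_sub_C_pow {q : K} (hq : ∀ j : ℕ, 0 < j → q ^ j ≠ 1) (a i j : ℕ) :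
    (∏ t ∈ Ioc a (a + i), (X - C (q ^ t))).coeff j =
      if j ≤ i then (-1) ^ (i - j) * q ^ ((i - j) * a + (i - j + 1).choose 2) * qBinom q i j
      else 0 := by
  induction i generalizing j with
  | zero =>
    rcases j with _ | j
    · simp [qBinom_self hq]
    · simp [coeff_one]
  | succ i ih =>
    rw [← add_assoc, prod_Ioc_succ_top (Nat.le_add_right a i)]
    rcases j with _ | j
    · simp only [mul_coeff_zero, coeff_sub, coeff_X_zero, coeff_C_zero, ih, Nat.zero_le,
        if_true, Nat.sub_zero, qBinom_zero_right hq, Nat.choose_succ_succ' (i + 1) 1]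
      simp only [Nat.choose_one_right]
      ring
    · rw [coeff_mul_X_sub_C, ih, ih]
      rcases lt_trichotomy j i with hji | rfl | hij
      · obtain ⟨d, rfl⟩ := Nat.exists_eq_add_of_lt hji
        rw [if_pos (by omega), if_pos (by omega), if_pos (by omega), qBinom_succ_succ hq hji,
          show j + d + 1 - j = d + 1 by omega, show j + d + 1 - (j + 1) = d by omega,
          show j + d + 1 + 1 - (j + 1) = d + 1 by omega, Nat.choose_succ_succ' (d + 1) 1]
        simp only [Nat.choose_one_right]
        ring
      · simp [qBinom_self hq]
      · rw [if_neg (by omega), if_neg (by omega), if_neg (by omega)]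
        ring

lemma natCast_sub_mul_sub_add_choose_two {i j m : ℕ} (hji : j ≤ i) (him : i ≤ m) :
    (((i - j) * (m - i) + (i - j + 1).choose 2 : ℕ) : ℤ) =
      j.choose 2 - j * m + (m * i - i.choose 2) := by
  obtain ⟨d, rfl⟩ := Nat.exists_eq_add_of_le hji
  obtain ⟨c, rfl⟩ := Nat.exists_eq_add_of_le him
  apply Int.cast_injective (α := ℚ)
  push_cast [Nat.add_sub_cancel_left, Nat.cast_choose_two]
  ring

theorem stmt17_general (q : K) (hq0 : q ≠ 0) (hq1 : ∀ j : ℕ, 0 < j → q ^ j ≠ 1)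
    (m ℓ : ℕ) (lam : ℕ → ℕ)
    (j : ℕ) :
    (∑ i ∈ Finset.range (m + 1),
        Polynomial.C (qRook q lam ℓ i * qFact q (m - i)) *
          ∏ t ∈ Finset.Icc (m - i + 1) m, (Polynomial.X - Polynomial.C (q ^ t))).coeff j =
      q ^ ((pSize lam ℓ : ℤ) - (j : ℤ) * m) * qHit q m m lam ℓ j := by
  have hcoeff : ∀ i ∈ range (m + 1),
      (Polynomial.C (qRook q lam ℓ i * qFact q (m - i)) *
        ∏ t ∈ Icc (m - i + 1) m, (Polynomial.X - Polynomial.C (q ^ t))).coeff j =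
      if j ≤ i then qRook q lam ℓ i * qFact q (m - i) *
        ((-1) ^ (i - j) * q ^ ((i - j) * (m - i) + (i - j + 1).choose 2) * qBinom q i j)
      else 0 := by
    intro i hi
    rw [Polynomial.coeff_C_mul, Icc_add_one_left_eq_Ioc,
      ← Nat.sub_add_cancel (mem_range_succ_iff.1 hi), Nat.add_sub_cancel,
      coeff_prod_Ioc_X_sub_C_pow hq1, mul_ite, mul_zero]
  have hrange : (range (m + 1)).filter (j ≤ ·) = Icc j m := by
    ext i; simp only [mem_filter, mem_range, mem_Icc]; omega
  rw [Polynomial.finsetSum_coeff, sum_congr rfl hcoeff, ← sum_filter, hrange, qHit, Nat.sub_self,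
    qFact_zero, div_one, mul_sum, mul_sum]
  refine sum_congr rfl fun i hi => ?_
  obtain ⟨hji, him⟩ := mem_Icc.1 hi
  have hsign : (-1 : K) ^ (i + j) = (-1) ^ (i - j) := by
    rw [show i + j = i - j + 2 * j by omega, pow_add, pow_mul, neg_one_sq, one_pow, mul_one]
  have hpow : q ^ ((pSize lam ℓ : ℤ) - j * m) * q ^ ((j.choose 2 : ℤ) - pSize lam ℓ) *
      q ^ ((m : ℤ) * i - i.choose 2) = q ^ ((i - j) * (m - i) + (i - j + 1).choose 2) := by
    rw [← zpow_add₀ hq0, ← zpow_add₀ hq0, ← zpow_natCast,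
      natCast_sub_mul_sub_add_choose_two hji him]
    ring_nf
  rw [hsign]
  linear_combination (-(qRook q lam ℓ i * qFact q (m - i) * qBinom q i j * (-1) ^ (i - j))) * hpow

/-- The Garsia–Remmel `q`-hit numbers `H̃_j^{m}(λ)`, defined as the coefficients
of `∑_i R_i(λ)[m-i]! ∏_{t=m-i+1}^{m}(x - q^t)`, satisfy
`H̃_j^{m}(λ) = q^{|λ| - jm} H_j^{m,m}(λ)`. -/
theorem stmt17 (q : K) (hq0 : q ≠ 0) (hq1 : ∀ j : ℕ, 0 < j → q ^ j ≠ 1)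
    (m ℓ : ℕ) (lam : ℕ → ℕ) (hm : 1 ≤ m) (hpart : IsPartitionIn lam ℓ m m)
    (j : ℕ) :
    (∑ i ∈ Finset.range (m + 1),
        Polynomial.C (qRook q lam ℓ i * qFact q (m - i)) *
          ∏ t ∈ Finset.Icc (m - i + 1) m, (Polynomial.X - Polynomial.C (q ^ t))).coeff j =
      q ^ ((pSize lam ℓ : ℤ) - (j : ℤ) * m) * qHit q m m lam ℓ j :=
  stmt17_general q hq0 hq1 m ℓ lam j
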